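/- arXiv:1812.09409 — 6 statements merged into one kernel-verified Lean document; each statement's English description precedes it below -/
import Mathlib

section
/- Let v : {1,…,N} → ℝ be nondecreasing with nonnegative entries (a sorted potential vector), let μ ∈ (0,1), w > 0, and let i₀ ∈ {1,…,N} be the index of the firing component. Define v' : {1,…,N} → ℝ by v'(1) = 0, v'(i) = μ v(i−1) + w for 2 ≤ i ≤ i₀, and v'(i) = μ v(i) + w for i₀ < i ≤ N. Then v' is nondecreasing and v' is a rearrangement of the vector Δ^{i₀}(v); that is, v' gives the order statistics of the potential vector obtained after component i₀ fires. -/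
/-- The firing map `Δ^{i₀}` : after component `i₀` fires, its potential resets to
`0` and every other component `j` gets potential `μ * u j + w`. -/
def fireMap (N : ℕ) (μ w : ℝ) (i₀ : Fin N) (u : Fin N → ℝ) : Fin N → ℝ :=
  fun j => if j = i₀ then 0 else μ * u j + w

/-! After `i₀` fires, the remaining entries `μ v j + w` are still in increasing order and all
nonnegative, while the fired entry is `0`. So the sorted vector is `0` followed by the
`μ v j + w`, `j ≠ i₀`, i.e. `Fin.cons 0 (i₀.removeNth (μ v + w))`, and the permutation putting
`Δ^{i₀}(v)` in this order is the inverse of the cycle `Fin.cycleRange i₀ = (0 1 … i₀)`. -/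

namespace Fin

variable {α : Type*} {n : ℕ}

lemma monotone_cons [Preorder α] {a : α} {f : Fin n → α} :
    Monotone (cons a f : Fin (n + 1) → α) ↔ (∀ i, a ≤ f i) ∧ Monotone f := by
  simpa only [monotone_iff_forall_lt] using! liftFun_cons (α := α) (· ≤ ·)

lemma _root_.Monotone.removeNth [Preorder α] {f : Fin (n + 1) → α} (hf : Monotone f)
    (p : Fin (n + 1)) : Monotone (p.removeNth f) :=
  hf.comp (strictMono_succAbove p).monotone

lemma cons_removeNth_apply (a : α) (x : Fin (n + 1) → α) (p i : Fin (n + 1)) :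
    (cons a (p.removeNth x) : Fin (n + 1) → α) i =
      if (i : ℕ) = 0 then a
      else if (i : ℕ) ≤ p then x ⟨i - 1, lt_of_le_of_lt (Nat.sub_le _ _) i.isLt⟩
      else x i := by
  induction i using Fin.cases with
  | zero => simp
  | succ j =>
    have hle : (j.succ : ℕ) ≤ p ↔ castSucc j < p := by
      rw [lt_def, val_succ, val_castSucc]
      omega
    rw [cons_succ, removeNth_apply, if_neg (by simp)]
    by_cases hj : castSucc j < p
    · rw [succAbove_of_castSucc_lt _ _ hj, if_pos (hle.2 hj)]
      rfl
    · rw [succAbove_of_le_castSucc _ _ (not_lt.1 hj), if_neg (mt hle.1 hj)]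

end Fin

lemma fireMap_eq_update (N : ℕ) (μ w : ℝ) (i₀ : Fin N) (u : Fin N → ℝ) :
    fireMap N μ w i₀ u = Function.update (fun j => μ * u j + w) i₀ 0 := by
  funext j
  simp only [fireMap, Function.update_apply]

theorem sorted_after_fire_general (N : ℕ) (μ w : ℝ)
    (hμ0 : 0 < μ) (hw : 0 < w)
    (v : Fin N → ℝ) (hvmono : Monotone v) (hvnonneg : ∀ i, 0 ≤ v i)
    (i₀ : Fin N) (v' : Fin N → ℝ)
    (hv' : ∀ i : Fin N, v' i =
      if i.val = 0 then 0
      else if i.val ≤ i₀.val then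
        μ * v ⟨i.val - 1, lt_of_le_of_lt (Nat.sub_le _ _) i.isLt⟩ + w
      else μ * v i + w) :
    Monotone v' ∧
      ∃ σ : Equiv.Perm (Fin N), ∀ i, v' i = fireMap N μ w i₀ v (σ i) := by
  obtain ⟨n, rfl⟩ := Nat.exists_eq_add_one_of_ne_zero i₀.pos.ne'
  set u : Fin (n + 1) → ℝ := fun j => μ * v j + w
  have hu : Monotone u := (hvmono.const_mul hμ0.le).add_const w
  have hu0 (j) : 0 ≤ u j := by have := hvnonneg j; positivity
  have hv'_eq : v' = Fin.cons 0 (i₀.removeNth u) := funext fun i => by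
    rw [hv' i, Fin.cons_removeNth_apply]
  refine ⟨hv'_eq ▸ Fin.monotone_cons.2 ⟨fun j => hu0 _, hu.removeNth i₀⟩, i₀.cycleRange.symm, ?_⟩
  have hcycle := Fin.cons_removeNth_eq_comp_cycleRange_symm (Function.update u i₀ 0) i₀
  rw [Function.update_self, Fin.removeNth_update] at hcycle
  intro i
  rw [hv'_eq, hcycle, fireMap_eq_update]
  rfl

/-- Let `v : Fin N → ℝ` (indices `0,…,N-1` standing for `1,…,N`) be
nondecreasing with nonnegative entries, `μ ∈ (0,1)`, `w > 0`, and let `i₀` be the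
index of the firing component.  Define `v'` by `v' 0 = 0`,
`v' i = μ v (i-1) + w` for `1 ≤ i ≤ i₀`, and `v' i = μ v i + w` for `i > i₀`.
Then `v'` is nondecreasing and is a rearrangement of `Δ^{i₀}(v)`, i.e. `v'`
gives the order statistics of the potential vector after component `i₀` fires. -/
theorem sorted_after_fire (N : ℕ) (hN : 2 ≤ N) (μ w : ℝ)
    (hμ0 : 0 < μ) (hμ1 : μ < 1) (hw : 0 < w)
    (v : Fin N → ℝ) (hvmono : Monotone v) (hvnonneg : ∀ i, 0 ≤ v i)
    (i₀ : Fin N) (v' : Fin N → ℝ)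
    (hv' : ∀ i : Fin N, v' i =
      if i.val = 0 then 0
      else if i.val ≤ i₀.val then
        μ * v ⟨i.val - 1, lt_of_le_of_lt (Nat.sub_le _ _) i.isLt⟩ + w
      else μ * v i + w) :
    Monotone v' ∧
      ∃ σ : Equiv.Perm (Fin N), ∀ i, v' i = fireMap N μ w i₀ v (σ i) :=
  sorted_after_fire_general N μ w hμ0 hw v hvmono hvnonneg i₀ v' hv'
end

section
/- Invariance of the metastable basin under firing: Let μ ∈ (0,1), w > 0, γ = w/(1−μ), and let v : {1,…,N} → ℝ be nondecreasing with (1 − μ^{i−1})·γ ≤ v(i) ≤ γ for all i ∈ {1,…,N}. Let i₀ ∈ {1,…,N} and let v' be the sorted vector after component i₀ fires, namely v'(1) = 0, v'(i) = μ v(i−1) + w for 2 ≤ i ≤ i₀, and v'(i) = μ v(i) + w for i₀ < i ≤ N. Then (1 − μ^{i−1})·γ ≤ v'(i) ≤ γ for all i ∈ {1,…,N}. (Equivalently, the set B = {x ∈ ℝ^N sorted : (1−μ^{i−1})γ ≤ x_i ≤ γ for all i} is invariant under the firing step.) -/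
/-! The fixed point `γ = w / (1 - μ)` of the leak `x ↦ μ x + w` satisfies
`μ ((1 - μ^k) γ) + w = (1 - μ^(k+1)) γ`, so one leak step moves a value from the band
`[(1 - μ^k) γ, γ]` into the band `[(1 - μ^(k+1)) γ, γ]`. A component that moves up one
slot after the firing therefore lands in exactly the band of its new slot, one that keeps
its slot lands in a narrower band, and the reset component sits at `0 = (1 - μ^0) γ`. -/

section Leak

variable {μ w : ℝ}

lemma leak_fixedPoint (hμ : μ ≠ 1) : μ * (w / (1 - μ)) + w = w / (1 - μ) := by
  field_simp [sub_ne_zero.mpr hμ.symm]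
  ring

lemma leak_mem_Icc_succ (hμ0 : 0 ≤ μ) (hμ1 : μ ≠ 1) {k : ℕ} {x : ℝ}
    (hx : x ∈ Set.Icc ((1 - μ ^ k) * (w / (1 - μ))) (w / (1 - μ))) :
    μ * x + w ∈ Set.Icc ((1 - μ ^ (k + 1)) * (w / (1 - μ))) (w / (1 - μ)) := by
  have hfix := leak_fixedPoint (w := w) hμ1
  have hlower : μ * ((1 - μ ^ k) * (w / (1 - μ))) + w = (1 - μ ^ (k + 1)) * (w / (1 - μ)) := by
    linear_combination hfix
  obtain ⟨hlo, hhi⟩ := hx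
  constructor
  · linarith [mul_le_mul_of_nonneg_left hlo hμ0]
  · linarith [mul_le_mul_of_nonneg_left hhi hμ0]

lemma Icc_one_sub_pow_mul_subset_of_le (hμ0 : 0 ≤ μ) (hμ1 : μ ≤ 1) {γ : ℝ} (hγ : 0 ≤ γ)
    {k l : ℕ} (hkl : k ≤ l) :
    Set.Icc ((1 - μ ^ l) * γ) γ ⊆ Set.Icc ((1 - μ ^ k) * γ) γ := by
  refine Set.Icc_subset_Icc_left (mul_le_mul_of_nonneg_right ?_ hγ)
  linarith [pow_le_pow_of_le_one hμ0 hμ1 hkl]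

end Leak

theorem basin_invariant_general (N : ℕ) (μ w : ℝ)
    (hμ0 : 0 < μ) (hμ1 : μ < 1) (hw : 0 < w)
    (v : Fin N → ℝ)
    (hv : ∀ i : Fin N,
      (1 - μ ^ (i : ℕ)) * (w / (1 - μ)) ≤ v i ∧ v i ≤ w / (1 - μ))
    (i₀ : Fin N) (v' : Fin N → ℝ)
    (hv' : ∀ i : Fin N, v' i =
      if i.val = 0 then 0
      else if i.val ≤ i₀.val then
        μ * v ⟨i.val - 1, lt_of_le_of_lt (Nat.sub_le _ _) i.isLt⟩ + w
      else μ * v i + w) :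
    ∀ i : Fin N,
      (1 - μ ^ (i : ℕ)) * (w / (1 - μ)) ≤ v' i ∧ v' i ≤ w / (1 - μ) := by
  have hγ : 0 < w / (1 - μ) := div_pos hw (sub_pos.mpr hμ1)
  intro i
  show v' i ∈ Set.Icc _ _
  rw [hv' i]
  split_ifs with h0 hle
  · simp [h0, hγ.le]
  · have hstep := leak_mem_Icc_succ hμ0.le hμ1.ne (hv ⟨i.val - 1, by omega⟩)
    rwa [Nat.sub_add_cancel (Nat.pos_of_ne_zero h0)] at hstep
  · exact Icc_one_sub_pow_mul_subset_of_le hμ0.le hμ1.le hγ.le (Nat.le_succ _)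
      (leak_mem_Icc_succ hμ0.le hμ1.ne (hv i))

/-- Invariance of the metastable basin under firing.  Let
`μ ∈ (0,1)`, `w > 0`, `γ = w/(1−μ)`, and let `v : Fin N → ℝ` (indices `0,…,N-1`
standing for `1,…,N`) be nondecreasing with `(1 − μ^i) γ ≤ v i ≤ γ` for all `i`
(0-based, so `μ^i` corresponds to `μ^{i−1}` with 1-based indices).  Let `i₀` be
the firing index and let `v'` be the sorted vector after component `i₀` fires:
`v' 0 = 0`, `v' i = μ v (i−1) + w` for `1 ≤ i ≤ i₀`, and `v' i = μ v i + w` for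
`i > i₀`.  Then `(1 − μ^i) γ ≤ v' i ≤ γ` for all `i`. -/
theorem basin_invariant (N : ℕ) (hN : 2 ≤ N) (μ w : ℝ)
    (hμ0 : 0 < μ) (hμ1 : μ < 1) (hw : 0 < w)
    (v : Fin N → ℝ) (hvmono : Monotone v)
    (hv : ∀ i : Fin N,
      (1 - μ ^ (i : ℕ)) * (w / (1 - μ)) ≤ v i ∧ v i ≤ w / (1 - μ))
    (i₀ : Fin N) (v' : Fin N → ℝ)
    (hv' : ∀ i : Fin N, v' i =
      if i.val = 0 then 0
      else if i.val ≤ i₀.val then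
        μ * v ⟨i.val - 1, lt_of_le_of_lt (Nat.sub_le _ _) i.isLt⟩ + w
      else μ * v i + w) :
    ∀ i : Fin N,
      (1 - μ ^ (i : ℕ)) * (w / (1 - μ)) ≤ v' i ∧ v' i ≤ w / (1 - μ) :=
  basin_invariant_general N μ w hμ0 hμ1 hw v hv i₀ v' hv'
end

section
/- Bounds on the firing probability in the metastable basin: Let μ ∈ (0,1), w > 0, γ = w/(1−μ), and let v : {1,…,N} → ℝ satisfy v(1) = 0 and (1 − μ^{i−1})·γ ≤ v(i) ≤ γ for all i ∈ {1,…,N}. Then η ≤ (1/N) Σ_{i=1}^{N} φ(v(i)) ≤ θ, where θ = φ(γ)(1 − 1/N) and η = φ(γ)(1 − (1/N)(1−μ^N)/(1−μ)). -/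
/-!
Both bounds are termwise. Above, `φ(v i) ≤ φ(γ)` for every `i`, and the term `i = 0`
vanishes. Below, `φ` is monotone and `c φ(γ) ≤ φ(c γ)` for `c ∈ [0,1]` (φ is concave with `φ(0) = 0`), so
`φ(v i) ≥ (1 - μ^i) φ(γ)`; summing these lower bounds is a geometric sum.
-/

/-- The firing probability function: `φ(u) = min(u,1)` for `u ≥ 0` and
`φ(u) = 0` for `u ≤ 0`. -/
noncomputable def phi (u : ℝ) : ℝ := min (max u 0) 1

lemma phi_monotone : Monotone phi :=
  fun _ _ h => min_le_min_right 1 (max_le_max_right 0 h)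

lemma mul_phi_le_phi_mul {c : ℝ} (hc0 : 0 ≤ c) (hc1 : c ≤ 1) (u : ℝ) :
    c * phi u ≤ phi (c * u) := by
  have h : c * phi u = min (max (c * u) 0) c := by
    rw [phi, mul_min_of_nonneg _ _ hc0, mul_max_of_nonneg _ _ hc0, mul_zero, mul_one]
  exact h ▸ min_le_min_left _ hc1

lemma Fin.sum_one_sub_pow {μ : ℝ} (hμ : μ ≠ 1) (N : ℕ) :
    ∑ i : Fin N, (1 - μ ^ (i : ℕ)) = N - (1 - μ ^ N) / (1 - μ) := by
  rw [Fin.sum_univ_eq_sum_range (fun i => 1 - μ ^ i), Finset.sum_sub_distrib,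
    geom_sum_eq hμ, ← neg_div_neg_eq]
  simp

lemma Finset.sum_le_card_sub_one_mul_of_eq_zero {ι : Type*} [Fintype ι] {f : ι → ℝ}
    {M : ℝ} (a : ι) (ha : f a = 0) (hf : ∀ i, f i ≤ M) :
    ∑ i, f i ≤ (Fintype.card ι - 1) * M := by
  classical
  rw [← Finset.sum_erase _ ha, ← Finset.card_univ,
    ← Finset.cast_card_erase_of_mem (Finset.mem_univ a), ← nsmul_eq_mul]
  exact Finset.sum_le_card_nsmul _ _ _ fun i _ => hf i

/-- Bounds on the firing probability in the metastable basin.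
Let `γ = w/(1−μ)` and let `v : Fin N → ℝ` (0-based indices) satisfy `v 0 = 0`
and `(1 − μ^i) γ ≤ v i ≤ γ` for all `i`.  Then
`η ≤ (1/N) Σ_i φ(v i) ≤ θ` where `θ = φ(γ)(1 − 1/N)` and
`η = φ(γ)(1 − (1/N)(1−μ^N)/(1−μ))`. -/
theorem firing_prob_bounds (N : ℕ) (hN : 2 ≤ N) (μ w : ℝ)
    (hμ0 : 0 < μ) (hμ1 : μ < 1)
    (v : Fin N → ℝ)
    (hv0 : v ⟨0, by omega⟩ = 0)
    (hv : ∀ i : Fin N,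
      (1 - μ ^ (i : ℕ)) * (w / (1 - μ)) ≤ v i ∧ v i ≤ w / (1 - μ)) :
    phi (w / (1 - μ)) * (1 - (1 / (N : ℝ)) * (1 - μ ^ N) / (1 - μ))
        ≤ (1 / (N : ℝ)) * ∑ i, phi (v i) ∧
    (1 / (N : ℝ)) * ∑ i, phi (v i)
        ≤ phi (w / (1 - μ)) * (1 - 1 / (N : ℝ)) := by
  set γ := w / (1 - μ)
  have hN0 : (N : ℝ) ≠ 0 := by positivity
  have lower : ∀ i : Fin N, (1 - μ ^ (i : ℕ)) * phi γ ≤ phi (v i) := fun i =>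
    (mul_phi_le_phi_mul (sub_nonneg.2 (pow_le_one₀ hμ0.le hμ1.le))
      (sub_le_self _ (pow_nonneg hμ0.le _)) γ).trans (phi_monotone (hv i).1)
  have lower_sum : (N - (1 - μ ^ N) / (1 - μ)) * phi γ ≤ ∑ i, phi (v i) := by
    rw [← Fin.sum_one_sub_pow hμ1.ne, Finset.sum_mul]
    exact Finset.sum_le_sum fun i _ => lower i
  have upper_sum : ∑ i, phi (v i) ≤ (N - 1) * phi γ := by
    simpa using Finset.sum_le_card_sub_one_mul_of_eq_zero (f := phi ∘ v) ⟨0, by omega⟩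
      (by simp [hv0, phi]) fun i => phi_monotone (hv i).2
  constructor
  · calc phi γ * (1 - 1 / (N : ℝ) * (1 - μ ^ N) / (1 - μ))
        = 1 / N * ((N - (1 - μ ^ N) / (1 - μ)) * phi γ) := by field_simp
      _ ≤ 1 / N * ∑ i, phi (v i) := by gcongr
  · calc 1 / (N : ℝ) * ∑ i, phi (v i) ≤ 1 / N * ((N - 1) * phi γ) := by gcongr
      _ = phi γ * (1 - 1 / N) := by field_simp
end

section
/- For all real numbers x and y with 0 < x ≤ 1 and 0 < y < 1, one has 1 − x·y ≤ (1 − y)^{(1−y)·x}. -/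
/-! Write `z = 1 - y` and `s = (1 - y) x`, so that `x y = s (z⁻¹ - 1)`. The bound
`log z ≥ 1 - z⁻¹` gives `z ^ s = exp (s log z) ≥ exp (-s (z⁻¹ - 1))`, and `exp (-a) ≥ 1 - a`. -/

open Real

theorem one_sub_mul_inv_sub_one_le_rpow {z s : ℝ} (hz : 0 < z) (hs : 0 ≤ s) :
    1 - s * (z⁻¹ - 1) ≤ z ^ s := by
  have hlog : -(s * (z⁻¹ - 1)) ≤ log z * s := by
    nlinarith [one_sub_inv_le_log_of_pos hz]
  calc 1 - s * (z⁻¹ - 1) ≤ exp (-(s * (z⁻¹ - 1))) := one_sub_le_exp_neg _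
    _ ≤ exp (log z * s) := exp_le_exp.mpr hlog
    _ = z ^ s := (rpow_def_of_pos hz s).symm

theorem one_sub_mul_le_rpow_general (x y : ℝ) (hx0 : 0 < x)
    (hy1 : y < 1) :
    1 - x * y ≤ (1 - y) ^ ((1 - y) * x) := by
  have hz : 0 < 1 - y := by linarith
  have hxy : (1 - y) * x * ((1 - y)⁻¹ - 1) = x * y := by
    field_simp
    ring
  simpa only [hxy] using one_sub_mul_inv_sub_one_le_rpow hz (by positivity : 0 ≤ (1 - y) * x)

/-- For all real `x, y` with `0 < x ≤ 1` and `0 < y < 1`,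
`1 − x·y ≤ (1 − y)^{(1−y)·x}` (real-exponent power). -/
theorem one_sub_mul_le_rpow (x y : ℝ) (hx0 : 0 < x) (hx1 : x ≤ 1)
    (hy0 : 0 < y) (hy1 : y < 1) :
    1 - x * y ≤ (1 - y) ^ ((1 - y) * x) :=
  one_sub_mul_le_rpow_general x y hx0 hy1
end

section
/- Upper bound for the survival product: For all μ ∈ (0,1), y ∈ (0,1) and every t ∈ ℕ, Π_{k=0}^{t−1} (1 − μ^k y) ≤ (1 − y)^{(1 − y)(1 − μ^t)/(1 − μ)}. -/
/-!
Each factor satisfies `1 - c y ≤ exp (-c y)`, and `-y ≤ (1 - y) log (1 - y)` (the tangent-line bound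
`x - 1 ≤ x log x` at `x = 1 - y`), so `1 - μ^k y ≤ (1 - y)^((1 - y) μ^k)`. Multiplying over
`k < t` adds the exponents, and `∑_{k<t} μ^k = (1 - μ^t)/(1 - μ)`.
-/

open Finset Real

lemma neg_le_one_sub_mul_log_one_sub {y : ℝ} (hy : y < 1) : -y ≤ (1 - y) * log (1 - y) := by
  linarith [self_sub_one_le_mul_log (sub_nonneg.mpr hy.le)]

lemma one_sub_mul_le_rpow_s11 {c y : ℝ} (hc : 0 ≤ c) (hy : y < 1) :
    1 - c * y ≤ (1 - y) ^ ((1 - y) * c) := by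
  rw [rpow_def_of_pos (sub_pos.mpr hy)]
  calc 1 - c * y ≤ exp (-(c * y)) := by linarith [add_one_le_exp (-(c * y))]
    _ ≤ exp (log (1 - y) * ((1 - y) * c)) := by
      gcongr
      nlinarith [neg_le_one_sub_mul_log_one_sub hy]

lemma geom_sum_range_eq_one_sub_div {μ : ℝ} (hμ : μ ≠ 1) (t : ℕ) :
    ∑ k ∈ range t, μ ^ k = (1 - μ ^ t) / (1 - μ) := by
  simpa using geom_sum_Ico' hμ (Nat.zero_le t)

theorem survival_product_upper_general (μ y : ℝ) (hμ0 : 0 < μ) (hμ1 : μ < 1)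
    (hy1 : y < 1) (t : ℕ) :
    ∏ k ∈ Finset.range t, (1 - μ ^ k * y)
      ≤ (1 - y) ^ ((1 - y) * (1 - μ ^ t) / (1 - μ)) := by
  have hpow_nonneg (k : ℕ) : 0 ≤ μ ^ k := pow_nonneg hμ0.le k
  have hfactor_nonneg (k : ℕ) : 0 ≤ 1 - μ ^ k * y := by
    -- `1 - μ^k y = (1 - μ^k) + μ^k (1 - y)`
    nlinarith [pow_le_one₀ hμ0.le hμ1.le (n := k), mul_nonneg (hpow_nonneg k) (sub_nonneg.mpr hy1.le)]
  calc ∏ k ∈ range t, (1 - μ ^ k * y)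
      ≤ ∏ k ∈ range t, (1 - y) ^ ((1 - y) * μ ^ k) :=
        prod_le_prod (fun k _ ↦ hfactor_nonneg k)
          (fun k _ ↦ one_sub_mul_le_rpow_s11 (hpow_nonneg k) hy1)
    _ = (1 - y) ^ ((1 - y) * (1 - μ ^ t) / (1 - μ)) := by
      rw [← rpow_sum_of_pos (sub_pos.mpr hy1), ← mul_sum,
        geom_sum_range_eq_one_sub_div hμ1.ne, mul_div_assoc]

/-- Upper bound for the survival product.  For all `μ ∈ (0,1)`,
`y ∈ (0,1)` and every `t ∈ ℕ`,
`Π_{k=0}^{t−1} (1 − μ^k y) ≤ (1 − y)^{(1 − y)(1 − μ^t)/(1 − μ)}`. -/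
theorem survival_product_upper (μ y : ℝ) (hμ0 : 0 < μ) (hμ1 : μ < 1)
    (hy0 : 0 < y) (hy1 : y < 1) (t : ℕ) :
    ∏ k ∈ Finset.range t, (1 - μ ^ k * y)
      ≤ (1 - y) ^ ((1 - y) * (1 - μ ^ t) / (1 - μ)) :=
  survival_product_upper_general μ y hμ0 hμ1 hy1 t
end

section
/- Probability that the system completely ceases to fire at a non-firing block: Let (Ω, P) be a probability space, μ ∈ (0,1), m ∈ ℕ with m ≥ 1, 0 < η ≤ θ < 1, and let A_0 ⊇ A_1 ⊇ A_2 ⊇ … be a decreasing sequence of events with P(A_0) = 1 such that for every k ≥ 0 with P(A_k) > 0 one has 1 − μ^{m+k} θ ≤ P(A_{k+1} | A_k) ≤ 1 − μ^{m+k} η. Set K = (1 − μ^m θ)^{−1/(1−μ)} and J = (1 − μ^m η)^{−(1−η)/(1−μ)}. Then 1/K ≤ P(⋂_{k=0}^{∞} A_k) ≤ 1/J. (Here A_k is the event that the non-firing block, begun after m initial failures from the metastable basin, has lasted at least k further steps, and ⋂_k A_k is the event S = ∞ that the system never fires again.) -/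
/-!
Since the events are nested, `P(A_n) = ∏_{k<n} P(A_{k+1} | A_k)`, so `P(A_n)` is squeezed between
`∏_{k<n} (1 - μ^k x)` for `x = μ^m θ` and `x = μ^m η`. Bernoulli's inequality gives
`(1 - x)^{μ^k} ≤ 1 - μ^k x`, and `log (1 - x) ≥ -x / (1 - x) ≥ -x / (1 - η)` gives
`1 - μ^k x ≤ (1 - x)^{(1 - η) μ^k}` for `x ≤ η`. Multiplying, the products are compared with
`1 - x` raised to (a multiple of) the geometric sum `∑_{k<n} μ^k`, which increases to `1 / (1 - μ)`;
continuity of `P` from above along `A_n ↓ ⋂ A_n` finishes the argument.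
-/

open MeasureTheory ProbabilityTheory Filter Topology Finset

section RealInequalities

open Real

theorem one_div_rpow_neg {b : ℝ} (hb : 0 ≤ b) (y : ℝ) : 1 / b ^ (-y) = b ^ y := by
  rw [rpow_neg hb, one_div, inv_inv]

theorem one_sub_pow_mul_pos {μ x : ℝ} (hμ0 : 0 ≤ μ) (hμ1 : μ ≤ 1) (hx0 : 0 ≤ x) (hx1 : x < 1)
    (k : ℕ) : 0 < 1 - μ ^ k * x := by
  nlinarith [pow_le_one₀ (n := k) hμ0 hμ1]

theorem one_sub_rpow_le_one_sub_mul {x t : ℝ} (hx : x ≤ 1) (ht0 : 0 ≤ t) (ht1 : t ≤ 1) :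
    (1 - x) ^ t ≤ 1 - t * x := by
  simpa [sub_eq_add_neg] using rpow_one_add_le_one_add_mul_self (s := -x) (by linarith) ht0 ht1

theorem neg_le_mul_log_one_sub {x η : ℝ} (hx : 0 ≤ x) (hxη : x ≤ η) (hη : η < 1) :
    -x ≤ (1 - η) * log (1 - x) := by
  have h1x : 0 < 1 - x := by linarith
  have hlog : -x / (1 - x) ≤ log (1 - x) := by
    have h := one_sub_inv_le_log_of_pos h1x
    rwa [show 1 - (1 - x)⁻¹ = -x / (1 - x) by field_simp; ring] at h
  calc -x = (1 - x) * (-x / (1 - x)) := by field_simp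
    _ ≤ (1 - η) * (-x / (1 - x)) :=
      mul_le_mul_of_nonpos_right (by linarith) (div_nonpos_of_nonpos_of_nonneg (by linarith) h1x.le)
    _ ≤ (1 - η) * log (1 - x) := mul_le_mul_of_nonneg_left hlog (by linarith)

theorem one_sub_mul_le_rpow_s13 {x η t : ℝ} (hx : 0 ≤ x) (hxη : x ≤ η) (hη : η < 1) (ht : 0 ≤ t) :
    1 - t * x ≤ (1 - x) ^ ((1 - η) * t) := by
  rw [rpow_def_of_pos (by linarith)]
  calc 1 - t * x ≤ exp (-(t * x)) := by linarith [add_one_le_exp (-(t * x))]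
    _ ≤ exp (log (1 - x) * ((1 - η) * t)) :=
      exp_le_exp.2 (by nlinarith [neg_le_mul_log_one_sub hx hxη hη])

theorem rpow_geom_sum_le_prod {μ x : ℝ} (hμ0 : 0 ≤ μ) (hμ1 : μ ≤ 1) (hx : x < 1) (n : ℕ) :
    (1 - x) ^ (∑ k ∈ range n, μ ^ k) ≤ ∏ k ∈ range n, (1 - μ ^ k * x) := by
  rw [rpow_sum_of_pos (by linarith)]
  exact prod_le_prod (fun k _ => rpow_nonneg (by linarith) _) fun k _ =>
    one_sub_rpow_le_one_sub_mul hx.le (pow_nonneg hμ0 k) (pow_le_one₀ hμ0 hμ1)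

theorem prod_le_rpow_geom_sum {μ x η : ℝ} (hμ0 : 0 ≤ μ) (hμ1 : μ ≤ 1) (hx : 0 ≤ x) (hxη : x ≤ η)
    (hη : η < 1) (n : ℕ) :
    ∏ k ∈ range n, (1 - μ ^ k * x) ≤ (1 - x) ^ ((1 - η) * ∑ k ∈ range n, μ ^ k) := by
  rw [mul_sum, rpow_sum_of_pos (by linarith)]
  exact prod_le_prod (fun k _ => (one_sub_pow_mul_pos hμ0 hμ1 hx (hxη.trans_lt hη) k).le)
    fun k _ => one_sub_mul_le_rpow_s13 hx hxη hη (pow_nonneg hμ0 k)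

theorem tendsto_rpow_mul_geom_sum {b μ : ℝ} (hb : 0 < b) (hμ0 : 0 ≤ μ) (hμ1 : μ < 1) (c : ℝ) :
    Tendsto (fun n => b ^ (c * ∑ k ∈ range n, μ ^ k)) atTop (𝓝 (b ^ (c * (1 - μ)⁻¹))) :=
  (continuousAt_const_rpow hb.ne').tendsto.comp
    ((hasSum_geometric_of_lt_one hμ0 hμ1).tendsto_sum_nat.const_mul c)

end RealInequalities

section NestedEvents

variable {Ω : Type*} [MeasurableSpace Ω] {P : Measure Ω} {A : ℕ → Set Ω}

theorem measure_eq_cond_mul_of_subset [IsFiniteMeasure P] {s t : Set Ω} (hs : MeasurableSet s)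
    (hts : t ⊆ s) : P t = P[t | s] * P s := by
  rw [cond_mul_eq_inter hs, Set.inter_eq_right.mpr hts]

theorem prod_le_measure_of_le_cond [IsFiniteMeasure P] (hmeas : ∀ k, MeasurableSet (A k))
    (hdec : ∀ k, A (k + 1) ⊆ A k) (hA0 : P (A 0) = 1) {a : ℕ → ENNReal} (ha : ∀ k, a k ≠ 0)
    (hcond : ∀ k, 0 < P (A k) → a k ≤ P[A (k + 1) | A k]) (n : ℕ) :
    ∏ k ∈ range n, a k ≤ P (A n) := by
  induction n with
  | zero => simp [hA0]
  | succ n ih =>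
    have hpos : 0 < P (A n) :=
      (pos_iff_ne_zero.2 (prod_ne_zero_iff.2 fun k _ => ha k)).trans_le ih
    rw [prod_range_succ, measure_eq_cond_mul_of_subset (hmeas n) (hdec n), mul_comm]
    exact mul_le_mul' (hcond n hpos) ih

theorem measure_le_prod_of_cond_le [IsProbabilityMeasure P] (hmeas : ∀ k, MeasurableSet (A k))
    (hdec : ∀ k, A (k + 1) ⊆ A k) {b : ℕ → ENNReal}
    (hcond : ∀ k, 0 < P (A k) → P[A (k + 1) | A k] ≤ b k) (n : ℕ) :
    P (A n) ≤ ∏ k ∈ range n, b k := by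
  induction n with
  | zero => simpa using prob_le_one
  | succ n ih =>
    rw [prod_range_succ, measure_eq_cond_mul_of_subset (hmeas n) (hdec n), mul_comm]
    rcases eq_zero_or_pos (P (A n)) with hzero | hpos
    · simp [hzero]
    · exact mul_le_mul' ih (hcond n hpos)

theorem ofReal_rpow_le_measure_iInter [IsFiniteMeasure P] (hmeas : ∀ k, MeasurableSet (A k))
    (hdec : ∀ k, A (k + 1) ⊆ A k) (hA0 : P (A 0) = 1) {μ x : ℝ} (hμ0 : 0 ≤ μ) (hμ1 : μ < 1)
    (hx0 : 0 ≤ x) (hx1 : x < 1)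
    (hcond : ∀ k, 0 < P (A k) → ENNReal.ofReal (1 - μ ^ k * x) ≤ P[A (k + 1) | A k]) :
    ENNReal.ofReal ((1 - x) ^ (1 - μ)⁻¹) ≤ P (⋂ k, A k) := by
  have hpos := one_sub_pow_mul_pos hμ0 hμ1.le hx0 hx1
  refine ge_of_tendsto' (tendsto_measure_iInter_atTop (fun n => (hmeas n).nullMeasurableSet)
    (antitone_nat_of_succ_le hdec) ⟨0, measure_ne_top P _⟩) fun n => ?_
  calc ENNReal.ofReal ((1 - x) ^ (1 - μ)⁻¹)
      ≤ ENNReal.ofReal ((1 - x) ^ (∑ k ∈ range n, μ ^ k)) :=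
        ENNReal.ofReal_le_ofReal <| Real.rpow_le_rpow_of_exponent_ge (by linarith) (by linarith)
          (sum_le_hasSum _ (fun k _ => pow_nonneg hμ0 k) (hasSum_geometric_of_lt_one hμ0 hμ1))
    _ ≤ ENNReal.ofReal (∏ k ∈ range n, (1 - μ ^ k * x)) :=
        ENNReal.ofReal_le_ofReal (rpow_geom_sum_le_prod hμ0 hμ1.le hx1 n)
    _ ≤ P (A n) := by
        rw [ENNReal.ofReal_prod_of_nonneg fun k _ => (hpos k).le]
        exact prod_le_measure_of_le_cond hmeas hdec hA0
          (fun k => (ENNReal.ofReal_pos.2 (hpos k)).ne') hcond n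

theorem measure_iInter_le_ofReal_rpow [IsProbabilityMeasure P] (hmeas : ∀ k, MeasurableSet (A k))
    (hdec : ∀ k, A (k + 1) ⊆ A k) {μ x η : ℝ} (hμ0 : 0 ≤ μ) (hμ1 : μ < 1) (hx : 0 ≤ x)
    (hxη : x ≤ η) (hη : η < 1)
    (hcond : ∀ k, 0 < P (A k) → P[A (k + 1) | A k] ≤ ENNReal.ofReal (1 - μ ^ k * x)) :
    P (⋂ k, A k) ≤ ENNReal.ofReal ((1 - x) ^ ((1 - η) * (1 - μ)⁻¹)) := by
  have hpos := one_sub_pow_mul_pos hμ0 hμ1.le hx (hxη.trans_lt hη)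
  refine ge_of_tendsto' ((ENNReal.continuous_ofReal.tendsto _).comp
    (tendsto_rpow_mul_geom_sum (by linarith) hμ0 hμ1 (1 - η))) fun n => ?_
  calc P (⋂ k, A k) ≤ P (A n) := measure_mono (Set.iInter_subset A n)
    _ ≤ ENNReal.ofReal (∏ k ∈ range n, (1 - μ ^ k * x)) := by
        rw [ENNReal.ofReal_prod_of_nonneg fun k _ => (hpos k).le]
        exact measure_le_prod_of_cond_le hmeas hdec hcond n
    _ ≤ _ := ENNReal.ofReal_le_ofReal (prod_le_rpow_geom_sum hμ0 hμ1.le hx hxη hη n)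

end NestedEvents

theorem ceases_to_fire_bounds_general {Ω : Type*} [MeasurableSpace Ω]
    (P : Measure Ω) [IsProbabilityMeasure P]
    (μ : ℝ) (hμ0 : 0 < μ) (hμ1 : μ < 1)
    (m : ℕ)
    (η θ : ℝ) (hη : 0 < η) (hηθ : η ≤ θ) (hθ : θ < 1)
    (A : ℕ → Set Ω) (hmeas : ∀ k, MeasurableSet (A k))
    (hdec : ∀ k, A (k + 1) ⊆ A k)
    (hA0 : P (A 0) = 1)
    (hcond : ∀ k : ℕ, 0 < P (A k) →
      ENNReal.ofReal (1 - μ ^ (m + k) * θ) ≤ P[A (k + 1) | A k] ∧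
        P[A (k + 1) | A k] ≤ ENNReal.ofReal (1 - μ ^ (m + k) * η)) :
    ENNReal.ofReal (1 / (1 - μ ^ m * θ) ^ (-(1 / (1 - μ))))
        ≤ P (⋂ k, A k) ∧
      P (⋂ k, A k)
        ≤ ENNReal.ofReal (1 / (1 - μ ^ m * η) ^ (-((1 - η) / (1 - μ)))) := by
  have hθ0 : 0 ≤ θ := hη.le.trans hηθ
  have hμm0 : 0 ≤ μ ^ m := pow_nonneg hμ0.le m
  have hμm1 : μ ^ m ≤ 1 := pow_le_one₀ hμ0.le hμ1.le
  have hxθ : μ ^ m * θ ≤ θ := mul_le_of_le_one_left hθ0 hμm1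
  have hxη : μ ^ m * η ≤ η := mul_le_of_le_one_left hη.le hμm1
  have hpow : ∀ k c, μ ^ (m + k) * c = μ ^ k * (μ ^ m * c) := fun k c => by ring
  constructor
  · rw [one_div_rpow_neg (by linarith), one_div]
    refine ofReal_rpow_le_measure_iInter hmeas hdec hA0 hμ0.le hμ1 (mul_nonneg hμm0 hθ0)
      (hxθ.trans_lt hθ) fun k hk => ?_
    simpa only [hpow] using (hcond k hk).1
  · rw [one_div_rpow_neg (by linarith [hηθ.trans_lt hθ]), div_eq_mul_inv]
    refine measure_iInter_le_ofReal_rpow hmeas hdec hμ0.le hμ1 (mul_nonneg hμm0 hη.le) hxη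
      (hηθ.trans_lt hθ) fun k hk => ?_
    simpa only [hpow] using (hcond k hk).2

/-- Probability that the system completely ceases to fire at a
non-firing block.  Let `(Ω, P)` be a probability space, `μ ∈ (0,1)`, `m ≥ 1`,
`0 < η ≤ θ < 1`, and `A_0 ⊇ A_1 ⊇ …` a decreasing sequence of events with
`P(A_0) = 1` such that whenever `P(A_k) > 0`,
`1 − μ^{m+k} θ ≤ P(A_{k+1} | A_k) ≤ 1 − μ^{m+k} η`.  With
`K = (1 − μ^m θ)^{−1/(1−μ)}` and `J = (1 − μ^m η)^{−(1−η)/(1−μ)}`, one has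
`1/K ≤ P(⋂_k A_k) ≤ 1/J`. -/
theorem ceases_to_fire_bounds {Ω : Type*} [MeasurableSpace Ω]
    (P : Measure Ω) [IsProbabilityMeasure P]
    (μ : ℝ) (hμ0 : 0 < μ) (hμ1 : μ < 1)
    (m : ℕ) (hm : 1 ≤ m)
    (η θ : ℝ) (hη : 0 < η) (hηθ : η ≤ θ) (hθ : θ < 1)
    (A : ℕ → Set Ω) (hmeas : ∀ k, MeasurableSet (A k))
    (hdec : ∀ k, A (k + 1) ⊆ A k)
    (hA0 : P (A 0) = 1)
    (hcond : ∀ k : ℕ, 0 < P (A k) →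
      ENNReal.ofReal (1 - μ ^ (m + k) * θ) ≤ P[A (k + 1) | A k] ∧
        P[A (k + 1) | A k] ≤ ENNReal.ofReal (1 - μ ^ (m + k) * η)) :
    ENNReal.ofReal (1 / (1 - μ ^ m * θ) ^ (-(1 / (1 - μ))))
        ≤ P (⋂ k, A k) ∧
      P (⋂ k, A k)
        ≤ ENNReal.ofReal (1 / (1 - μ ^ m * η) ^ (-((1 - η) / (1 - μ)))) :=
  ceases_to_fire_bounds_general P μ hμ0 hμ1 m η θ hη hηθ hθ A hmeas hdec hA0 hcond
end
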